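/- arXiv:1504.04961 — 4 statements merged into one kernel-verified Lean document; each statement's English description precedes it below -/
import Mathlib

section
/- Let I = (a,b) with -∞ ≤ a < b ≤ +∞, let B : I → ℝ be C² with B'' ≥ 0 on I, let c = 1/∫_a^b exp(-t²/2 - B(t)) dt, let E(y) = (1/√(2π)) ∫_{-∞}^y exp(-t²/2) dt, and define A(x) = E⁻¹(c ∫_a^x exp(-t²/2 - B(t)) dt). Then A'(x) ≥ 1 for all x ∈ I. -/
/-!
Write `φ` for the standard Gaussian density and `p = c e^{-x²/2 - B}`. Differentiating
`E (A x) = ∫_a^x p` gives `A' = p / φ(A)`, so the claim is `D := p - φ ∘ A ≥ 0`.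
Since `φ' = -y φ` and `p' = p (-x - B')`, one finds `D' = p (A - x - B')`. At an interior local
minimum of `D` this vanishes, and the second-order condition `(p (A - x - B'))' ≥ 0` becomes
`A' ≥ 1 + B'' ≥ 1`, i.e. `D ≥ 0` there. On the other hand `A → ∓∞` at the two ends of `I`
(because `E ∘ A` tends to `0` and `1`), so `φ ∘ A → 0` and `D` is eventually above any negative
level near both ends: a negative value of `D` would therefore force an interior minimum where
`D < 0`, which is impossible.
-/

open Real MeasureTheory Set Filter Topology ProbabilityTheory Function

theorem IsLocalMin.nonneg_of_hasDerivAt_of_hasDerivAt {f f' : ℝ → ℝ} {a f'' : ℝ}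
    (h : IsLocalMin f a) (hf : ∀ᶠ x in 𝓝 a, HasDerivAt f (f' x) x) (hf' : HasDerivAt f' f'' a) :
    0 ≤ f'' := by
  by_contra! hneg
  -- then `f' < 0` just to the right of `a`, so by the mean value theorem `f` drops below `f a`
  have hzero : f' a = 0 := h.hasDerivAt_eq_zero hf.self_of_nhds
  have hslope : ∀ᶠ x in 𝓝[>] a, slope f' a x < 0 :=
    ((hasDerivAt_iff_tendsto_slope.1 hf').mono_left (nhdsGT_le_nhdsNE a)).eventually
      (gt_mem_nhds hneg)
  obtain ⟨u, hau : a < u, hu⟩ := mem_nhdsGT_iff_exists_Ioo_subset.1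
    (hslope.and (nhdsWithin_le_nhds (hf.and h)))
  set y := (a + u) / 2
  have hay : a < y := by simp only [y]; linarith
  have hyu : y < u := by simp only [y]; linarith
  have hcont : ContinuousOn f (Icc a y) := fun x hx =>
    (hx.1.eq_or_lt.elim (fun hax => hax ▸ hf.self_of_nhds)
      fun hax => (hu ⟨hax, hx.2.trans_lt hyu⟩).2.1).continuousAt.continuousWithinAt
  obtain ⟨ξ, hξ, hmvt⟩ := exists_hasDerivAt_eq_slope f f' hay hcont
    fun x hx => (hu ⟨hx.1, hx.2.trans hyu⟩).2.1
  have hf'ξ : f' ξ < 0 := by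
    have hslopeξ := (hu ⟨hξ.1, hξ.2.trans hyu⟩).1
    rw [slope_def_field, hzero, sub_zero] at hslopeξ
    by_contra! h
    exact hslopeξ.not_ge (div_nonneg h (sub_pos.2 hξ.1).le)
  exact hf'ξ.not_ge (hmvt ▸ div_nonneg (sub_nonneg.2 (hu ⟨hay, hyu⟩).2.2) (sub_pos.2 hay).le)

theorem exists_isLocalMin_mem_Ioo {D : ℝ → ℝ} {a b x : ℝ} (hD : ContinuousOn D (Icc a b))
    (hx : x ∈ Icc a b) (ha : D x < D a) (hb : D x < D b) :
    ∃ x₀ ∈ Ioo a b, IsLocalMin D x₀ ∧ D x₀ ≤ D x := by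
  obtain ⟨x₀, hx₀, hmin⟩ := isCompact_Icc.exists_isMinOn ⟨x, hx⟩ hD
  have hx₀' : x₀ ∈ Ioo a b := by
    refine ⟨hx₀.1.lt_of_ne ?_, hx₀.2.lt_of_ne ?_⟩ <;> rintro rfl
    · exact (hmin hx).not_gt ha
    · exact (hmin hx).not_gt hb
  exact ⟨x₀, hx₀', hmin.isLocalMin (Icc_mem_nhds hx₀'.1 hx₀'.2), hmin hx⟩

theorem setIntegral_pos_of_forall_pos {α : Type*} [MeasurableSpace α] {μ : Measure α}
    {f : α → ℝ} (hf : ∀ t, 0 < f t) {s : Set α} (hfs : IntegrableOn f s μ) (hs : μ s ≠ 0) :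
    0 < ∫ t in s, f t ∂μ := by
  have hsupp : support f = univ := eq_univ_of_forall fun t => (hf t).ne'
  rw [setIntegral_pos_iff_support_of_nonneg_ae (.of_forall fun t => (hf t).le) hfs, hsupp,
    univ_inter]
  exact pos_iff_ne_zero.2 hs

theorem hasDerivAt_integral_Iio {g : ℝ → ℝ} (hg : Integrable g) {x : ℝ} (hgx : ContinuousAt g x) :
    HasDerivAt (fun y => ∫ t in Iio y, g t) (g x) x := by
  have hFTC := intervalIntegral.integral_hasDerivAt_right (a := x) hg.intervalIntegrable
    hg.aestronglyMeasurable.stronglyMeasurableAtFilter hgx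
  refine (hFTC.const_add (∫ t in Iio x, g t)).congr_of_eventuallyEq (.of_forall fun y => ?_)
  change ∫ t in Iio y, g t = (∫ t in Iio x, g t) + ∫ t in x..y, g t
  rw [← intervalIntegral.integral_Iio_sub_Iio' hg.integrableOn hg.integrableOn]
  ring

theorem hasDerivAt_setIntegral_inter_Iio {S : Set ℝ} (hS : IsOpen S) {f : ℝ → ℝ}
    (hf : IntegrableOn f S) {x : ℝ} (hx : x ∈ S) (hfx : ContinuousAt f x) :
    HasDerivAt (fun y => ∫ t in S ∩ Iio y, f t) (f x) x := by
  have hind : ContinuousAt (S.indicator f) x :=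
    hfx.congr (eventually_of_mem (hS.mem_nhds hx) fun y hy => (indicator_of_mem hy f).symm)
  simpa only [setIntegral_indicator hS.measurableSet, inter_comm, indicator_of_mem hx] using
    hasDerivAt_integral_Iio (hf.integrable_indicator hS.measurableSet) hind

theorem tendsto_setIntegral_inter_of_eventually_mem_iff {α ι : Type*} [MeasurableSpace α]
    {μ : Measure α} {l : Filter ι} [l.IsCountablyGenerated] {f : α → ℝ} {S s₀ : Set α}
    {s : ι → Set α} (hf : IntegrableOn f S μ) (hS : MeasurableSet S)
    (hs : ∀ i, MeasurableSet (s i)) (hs₀ : MeasurableSet s₀)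
    (h : ∀ t ∈ S, ∀ᶠ i in l, t ∈ s i ↔ t ∈ s₀) :
    Tendsto (fun i => ∫ t in S ∩ s i, f t ∂μ) l (𝓝 (∫ t in S ∩ s₀, f t ∂μ)) := by
  have hrw : ∀ s', MeasurableSet s' →
      ∫ t in S ∩ s', f t ∂μ = ∫ t, s'.indicator f t ∂(μ.restrict S) := fun s' hs' => by
    rw [integral_indicator hs', Measure.restrict_restrict hs', inter_comm]
  simp only [hrw _ (hs _), hrw _ hs₀]
  refine tendsto_integral_filter_of_dominated_convergence (fun t => ‖f t‖)
    (.of_forall fun i => hf.aestronglyMeasurable.indicator (hs i))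
    (.of_forall fun i => .of_forall fun t => norm_indicator_le_norm_self f t) hf.norm ?_
  filter_upwards [ae_restrict_of_forall_mem hS h] with t ht
  exact tendsto_const_nhds.congr' (ht.mono fun i hi => by by_cases ht₀ : t ∈ s₀ <;> simp [ht₀, hi])

theorem StrictMono.range_mem_nhds {E : ℝ → ℝ} (hE : StrictMono E) (hc : Continuous E) (y : ℝ) :
    range E ∈ 𝓝 (E y) :=
  mem_of_superset (Ioo_mem_nhds (hE (sub_one_lt y)) (hE (lt_add_one y)))
    ((intermediate_value_Ioo (by linarith) hc.continuousOn).trans (image_subset_range _ _))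

theorem StrictMono.hasDerivAt_invFun {E : ℝ → ℝ} (hE : StrictMono E) (hc : Continuous E)
    {y e : ℝ} (he : HasDerivAt E e y) (he₀ : e ≠ 0) : HasDerivAt (invFun E) e⁻¹ (E y) := by
  have hleft : ∀ z, invFun E (E z) = z := leftInverse_invFun hE.injective
  have hmono : StrictMonoOn (invFun E) (range E) := by
    rintro _ ⟨u, rfl⟩ _ ⟨v, rfl⟩ huv
    simpa only [hleft] using hE.lt_iff_lt.1 huv
  have hcont : ContinuousAt (invFun E) (E y) :=
    hmono.continuousAt_of_image_mem_nhds (hE.range_mem_nhds hc y)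
      (mem_of_superset univ_mem fun z _ => ⟨E z, mem_range_self z, hleft z⟩)
  exact HasDerivAt.of_local_left_inverse hcont (by rwa [hleft]) he₀
    (mem_of_superset (hE.range_mem_nhds hc y) fun _ hq => invFun_eq hq)

theorem HasDerivAt.of_comp_of_deriv_pos {E e A : ℝ → ℝ} (hE : ∀ y, HasDerivAt E (e y) y)
    (he : ∀ y, 0 < e y) {x F' : ℝ} (hEA : HasDerivAt (fun y => E (A y)) F' x) :
    HasDerivAt A (F' / e (A x)) x := by
  have hmono : StrictMono E := strictMono_of_hasDerivAt_pos hE he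
  have hcont : Continuous E := continuous_iff_continuousAt.2 fun y => (hE y).continuousAt
  have hcomp : invFun E ∘ (fun y => E (A y)) = A :=
    funext fun z => leftInverse_invFun hmono.injective (A z)
  simpa only [hcomp, div_eq_inv_mul] using
    (hmono.hasDerivAt_invFun hcont (hE (A x)) (he (A x)).ne').comp x hEA

theorem StrictMono.tendsto_atTop_of_tendsto_comp {α : Type*} {E : ℝ → ℝ} (hE : StrictMono E)
    {L : ℝ} (hL : ∀ y, E y < L) {A : α → ℝ} {l : Filter α}
    (h : Tendsto (fun x => E (A x)) l (𝓝 L)) : Tendsto A l atTop :=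
  Filter.tendsto_atTop.2 fun M => (h.eventually (lt_mem_nhds (hL M))).mono fun _ hx =>
    (hE.lt_iff_lt.1 hx).le

theorem StrictMono.tendsto_atBot_of_tendsto_comp {α : Type*} {E : ℝ → ℝ} (hE : StrictMono E)
    {L : ℝ} (hL : ∀ y, L < E y) {A : α → ℝ} {l : Filter α}
    (h : Tendsto (fun x => E (A x)) l (𝓝 L)) : Tendsto A l atBot :=
  Filter.tendsto_atBot.2 fun M => (h.eventually (gt_mem_nhds (hL M))).mono fun _ hx =>
    (hE.lt_iff_lt.1 hx).le

theorem gaussianPDFReal_zero_one :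
    gaussianPDFReal 0 1 = fun x => (√(2 * π))⁻¹ * exp (-x ^ 2 / 2) := by
  ext x
  simp [gaussianPDFReal]

theorem hasDerivAt_neg_sq_div_two (x : ℝ) : HasDerivAt (fun x : ℝ => -x ^ 2 / 2) (-x) x := by
  simpa [neg_div] using ((hasDerivAt_pow 2 x).neg).div_const (2 : ℝ)

theorem hasDerivAt_gaussianPDFReal_zero_one (x : ℝ) :
    HasDerivAt (gaussianPDFReal 0 1) (-x * gaussianPDFReal 0 1 x) x := by
  rw [gaussianPDFReal_zero_one]
  exact ((hasDerivAt_neg_sq_div_two x).exp.const_mul _).congr_deriv (by ring)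

theorem tendsto_gaussianPDFReal_zero_one_cocompact :
    Tendsto (gaussianPDFReal 0 1) (cocompact ℝ) (𝓝 0) := by
  have hsq : Tendsto (fun x : ℝ => -x ^ 2 / 2) (cocompact ℝ) atBot := by
    have := (tendsto_pow_atTop two_ne_zero).comp (tendsto_norm_cocompact_atTop (E := ℝ))
    simpa only [comp_def, norm_eq_abs, sq_abs] using
      (tendsto_neg_atTop_atBot.comp this).atBot_div_const two_pos
  simpa [gaussianPDFReal_zero_one] using (tendsto_exp_atBot.comp hsq).const_mul (√(2 * π))⁻¹

theorem hasDerivAt_integral_Iic_gaussianPDFReal (y : ℝ) :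
    HasDerivAt (fun y => ∫ t in Iic y, gaussianPDFReal 0 1 t) (gaussianPDFReal 0 1 y) y := by
  simpa only [integral_Iic_eq_integral_Iio] using
    hasDerivAt_integral_Iio (integrable_gaussianPDFReal 0 1)
      (hasDerivAt_gaussianPDFReal_zero_one y).continuousAt

theorem integral_Iic_gaussianPDFReal_pos (μ : ℝ) {v : NNReal} (hv : v ≠ 0) (y : ℝ) :
    0 < ∫ t in Iic y, gaussianPDFReal μ v t :=
  setIntegral_pos_of_forall_pos (gaussianPDFReal_pos μ v · hv)
    (integrable_gaussianPDFReal μ v).integrableOn (by simp)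

theorem integral_Iic_gaussianPDFReal_lt_one (μ : ℝ) {v : NNReal} (hv : v ≠ 0) (y : ℝ) :
    ∫ t in Iic y, gaussianPDFReal μ v t < 1 := by
  have hIoi : 0 < ∫ t in Ioi y, gaussianPDFReal μ v t :=
    setIntegral_pos_of_forall_pos (gaussianPDFReal_pos μ v · hv)
      (integrable_gaussianPDFReal μ v).integrableOn (by simp)
  have := intervalIntegral.integral_Iic_add_Ioi (integrable_gaussianPDFReal μ v).integrableOn
    (integrable_gaussianPDFReal μ v).integrableOn (b := y)
  rw [integral_gaussianPDFReal_eq_one μ hv] at this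
  linarith

theorem neBot_comap_coe_nhdsLT {a b : EReal} (hab : a < b) :
    (comap ((↑) : ℝ → EReal) (𝓝[<] b)).NeBot :=
  haveI : (𝓝[<] b).NeBot := nhdsLT_neBot_of_exists_lt ⟨a, hab⟩
  NeBot.comap_of_range_mem this (mem_of_superset (Ioo_mem_nhdsLT hab) fun e he =>
    ⟨e.toReal, EReal.coe_toReal (ne_top_of_lt he.2) (ne_bot_of_gt he.1)⟩)

theorem neBot_comap_coe_nhdsGT {a b : EReal} (hab : a < b) :
    (comap ((↑) : ℝ → EReal) (𝓝[>] a)).NeBot :=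
  haveI : (𝓝[>] a).NeBot := nhdsGT_neBot_of_exists_gt ⟨b, hab⟩
  NeBot.comap_of_range_mem this (mem_of_superset (Ioo_mem_nhdsGT hab) fun e he =>
    ⟨e.toReal, EReal.coe_toReal (ne_top_of_lt he.2) (ne_bot_of_gt he.1)⟩)

theorem eventually_comap_coe_nhdsLT {a b : EReal} {x : ℝ} (hx : (x : EReal) ∈ Ioo a b) :
    ∀ᶠ y : ℝ in comap ((↑) : ℝ → EReal) (𝓝[<] b), (y : EReal) ∈ Ioo a b ∧ x < y :=
  mem_of_superset (preimage_mem_comap (inter_mem (Ioo_mem_nhdsLT hx.2)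
    (Ioo_mem_nhdsLT (hx.1.trans hx.2)))) fun _ hy => ⟨hy.2, EReal.coe_lt_coe_iff.1 hy.1.1⟩

theorem eventually_comap_coe_nhdsGT {a b : EReal} {x : ℝ} (hx : (x : EReal) ∈ Ioo a b) :
    ∀ᶠ y : ℝ in comap ((↑) : ℝ → EReal) (𝓝[>] a), (y : EReal) ∈ Ioo a b ∧ y < x :=
  mem_of_superset (preimage_mem_comap (inter_mem (Ioo_mem_nhdsGT hx.1)
    (Ioo_mem_nhdsGT (hx.1.trans hx.2)))) fun _ hy => ⟨hy.2, EReal.coe_lt_coe_iff.1 hy.1.2⟩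

theorem tendsto_atTop_of_comp_eq_setIntegral {I : Set ℝ} (hI : MeasurableSet I) (hne : I.Nonempty)
    {f : ℝ → ℝ} (hf : IntegrableOn f I) {c : ℝ} (hc : c * ∫ t in I, f t = 1) {E A : ℝ → ℝ}
    (hE : StrictMono E) (hE₁ : ∀ y, E y < 1) (hA : ∀ x ∈ I, E (A x) = c * ∫ t in I ∩ Iio x, f t)
    {l : Filter ℝ} [l.IsCountablyGenerated] (hl : ∀ x ∈ I, ∀ᶠ y in l, y ∈ I ∧ x < y) :
    Tendsto A l atTop := by
  obtain ⟨x₀, hx₀⟩ := hne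
  have hlim := tendsto_setIntegral_inter_of_eventually_mem_iff hf hI (fun _ => measurableSet_Iio)
    MeasurableSet.univ fun t ht => (hl t ht).mono fun _ hy => iff_of_true hy.2 trivial
  rw [inter_univ] at hlim
  refine hE.tendsto_atTop_of_tendsto_comp hE₁ ((hc ▸ hlim.const_mul c).congr' ?_)
  exact (hl x₀ hx₀).mono fun y hy => (hA y hy.1).symm

theorem tendsto_atBot_of_comp_eq_setIntegral {I : Set ℝ} (hI : MeasurableSet I) (hne : I.Nonempty)
    {f : ℝ → ℝ} (hf : IntegrableOn f I) {c : ℝ} {E A : ℝ → ℝ}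
    (hE : StrictMono E) (hE₀ : ∀ y, 0 < E y) (hA : ∀ x ∈ I, E (A x) = c * ∫ t in I ∩ Iio x, f t)
    {l : Filter ℝ} [l.IsCountablyGenerated] (hl : ∀ x ∈ I, ∀ᶠ y in l, y ∈ I ∧ y < x) :
    Tendsto A l atBot := by
  obtain ⟨x₀, hx₀⟩ := hne
  have hlim := tendsto_setIntegral_inter_of_eventually_mem_iff hf hI (fun _ => measurableSet_Iio)
    MeasurableSet.empty fun t ht => (hl t ht).mono fun _ hy => iff_of_false hy.2.asymm id
  rw [inter_empty, setIntegral_empty] at hlim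
  refine hE.tendsto_atBot_of_tendsto_comp hE₀ ((mul_zero c ▸ hlim.const_mul c).congr' ?_)
  exact (hl x₀ hx₀).mono fun y hy => (hA y hy.1).symm

theorem le_of_isLocalMin_sub {p q A b' : ℝ → ℝ} {x₀ β : ℝ}
    (hp : ∀ᶠ x in 𝓝 x₀, HasDerivAt p (p x * (-x - b' x)) x) (hp₀ : 0 < p x₀)
    (hq : ∀ y, HasDerivAt q (-y * q y) y) (hq₀ : ∀ y, 0 < q y)
    (hA : ∀ᶠ x in 𝓝 x₀, HasDerivAt A (p x / q (A x)) x)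
    (hb' : HasDerivAt b' β x₀) (hβ : 0 ≤ β)
    (hmin : IsLocalMin (fun x => p x - q (A x)) x₀) : q (A x₀) ≤ p x₀ := by
  set H := fun x => A x - x - b' x
  -- `(q ∘ A)' = -A q(A) · p / q(A) = -A p`
  have hD : ∀ᶠ x in 𝓝 x₀, HasDerivAt (fun x => p x - q (A x)) (p x * H x) x := by
    filter_upwards [hp, hA] with x hpx hAx
    refine (hpx.sub ((hq (A x)).comp x hAx)).congr_deriv ?_
    field_simp [(hq₀ (A x)).ne']
    ring
  have hH : H x₀ = 0 :=
    (mul_eq_zero.1 (hmin.hasDerivAt_eq_zero hD.self_of_nhds)).resolve_left hp₀.ne'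
  have hG : HasDerivAt (fun x => p x * H x) (p x₀ * (p x₀ / q (A x₀) - 1 - β)) x₀ := by
    refine (hp.self_of_nhds.mul ((hA.self_of_nhds.sub (hasDerivAt_id x₀)).sub hb')).congr_deriv ?_
    change p x₀ * (-x₀ - b' x₀) * H x₀ + _ = _
    rw [hH, mul_zero, zero_add]
  have hsecond := (mul_nonneg_iff_of_pos_left hp₀).1
    (hmin.nonneg_of_hasDerivAt_of_hasDerivAt hD hG)
  exact (one_le_div (hq₀ _)).1 (by linarith)

theorem le_of_tendsto_ends {I : Set ℝ} (hIo : IsOpen I) (hIc : I.OrdConnected)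
    {la lb : Filter ℝ} [la.NeBot] [lb.NeBot]
    (hla : ∀ x ∈ I, ∀ᶠ y in la, y ∈ I ∧ y < x) (hlb : ∀ x ∈ I, ∀ᶠ y in lb, y ∈ I ∧ x < y)
    {p q A b' b'' : ℝ → ℝ}
    (hp : ∀ x ∈ I, HasDerivAt p (p x * (-x - b' x)) x) (hp₀ : ∀ x ∈ I, 0 < p x)
    (hq : ∀ y, HasDerivAt q (-y * q y) y) (hq₀ : ∀ y, 0 < q y)
    (hA : ∀ x ∈ I, HasDerivAt A (p x / q (A x)) x)
    (hb' : ∀ x ∈ I, HasDerivAt b' (b'' x) x) (hb'' : ∀ x ∈ I, 0 ≤ b'' x)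
    (hqa : Tendsto (fun x => q (A x)) la (𝓝 0)) (hqb : Tendsto (fun x => q (A x)) lb (𝓝 0)) :
    ∀ x ∈ I, q (A x) ≤ p x := by
  by_contra! ⟨x₁, hx₁, hlt⟩
  set D := fun x => p x - q (A x)
  have hends : ∀ l : Filter ℝ, Tendsto (fun x => q (A x)) l (𝓝 0) →
      ∀ᶠ y in l, y ∈ I → D x₁ < D y := fun l hl =>
    (hl.eventually (gt_mem_nhds (by linarith : 0 < q (A x₁) - p x₁))).mono fun y hy hyI => by
      simp only [D]
      linarith [hp₀ y hyI]
  obtain ⟨u, ⟨huI, hux⟩, hu⟩ := ((hla x₁ hx₁).and (hends la hqa)).exists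
  obtain ⟨v, ⟨hvI, hxv⟩, hv⟩ := ((hlb x₁ hx₁).and (hends lb hqb)).exists
  have hDcont : ContinuousOn D (Icc u v) := fun x hx =>
    have hxI := hIc.out huI hvI hx
    ((hp x hxI).continuousAt.sub
      ((hq _).continuousAt.comp (hA x hxI).continuousAt)).continuousWithinAt
  obtain ⟨x₀, hx₀, hmin, hle⟩ :=
    exists_isLocalMin_mem_Ioo hDcont ⟨hux.le, hxv.le⟩ (hu huI) (hv hvI)
  have hx₀I := hIc.out huI hvI (Ioo_subset_Icc_self hx₀)
  have hnhds := hIo.mem_nhds hx₀I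
  have hx₀le := le_of_isLocalMin_sub (eventually_of_mem hnhds hp) (hp₀ x₀ hx₀I) hq hq₀
    (eventually_of_mem hnhds hA) (hb' x₀ hx₀I) (hb'' x₀ hx₀I) hmin
  simp only [D] at hle
  linarith

/-- The filters `la` and `lb` stand for `x → a⁺` and `x → b⁻` on the interval `I = (a, b)`. -/
theorem one_le_deriv_of_transport_to_gaussian {I : Set ℝ} (hIo : IsOpen I) (hIc : I.OrdConnected)
    {la lb : Filter ℝ} [la.NeBot] [lb.NeBot] [la.IsCountablyGenerated] [lb.IsCountablyGenerated]
    (hla : ∀ x ∈ I, ∀ᶠ y in la, y ∈ I ∧ y < x) (hlb : ∀ x ∈ I, ∀ᶠ y in lb, y ∈ I ∧ x < y)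
    {B B' B'' : ℝ → ℝ} (hB' : ∀ x ∈ I, HasDerivAt B (B' x) x)
    (hB'' : ∀ x ∈ I, HasDerivAt B' (B'' x) x) (hBconv : ∀ x ∈ I, 0 ≤ B'' x)
    (hint : IntegrableOn (fun t => exp (-t ^ 2 / 2 - B t)) I)
    {c : ℝ} (hc : c = (∫ t in I, exp (-t ^ 2 / 2 - B t))⁻¹) {A : ℝ → ℝ}
    (hA : ∀ x ∈ I, ∫ t in Iic (A x), gaussianPDFReal 0 1 t =
      c * ∫ t in I ∩ Iio x, exp (-t ^ 2 / 2 - B t)) :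
    ∀ x ∈ I, 1 ≤ deriv A x := by
  intro x hx
  set f : ℝ → ℝ := fun t => exp (-t ^ 2 / 2 - B t)
  have hφ₀ : ∀ y, 0 < gaussianPDFReal 0 1 y := (gaussianPDFReal_pos 0 1 · one_ne_zero)
  have hΦmono := strictMono_of_hasDerivAt_pos hasDerivAt_integral_Iic_gaussianPDFReal hφ₀
  have hZ : 0 < ∫ t in I, f t :=
    setIntegral_pos_of_forall_pos (fun t => exp_pos _) hint (hIo.measure_ne_zero volume ⟨x, hx⟩)
  have hf : ∀ x ∈ I, HasDerivAt f (f x * (-x - B' x)) x := fun x hx =>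
    ((hasDerivAt_neg_sq_div_two x).sub (hB' x hx)).exp
  have hA' : ∀ x ∈ I, HasDerivAt A (c * f x / gaussianPDFReal 0 1 (A x)) x := fun x hx =>
    .of_comp_of_deriv_pos hasDerivAt_integral_Iic_gaussianPDFReal hφ₀
      (((hasDerivAt_setIntegral_inter_Iio hIo hint hx (hf x hx).continuousAt).const_mul c)
        |>.congr_of_eventuallyEq (eventually_of_mem (hIo.mem_nhds hx) hA))
  have hAa := tendsto_atBot_of_comp_eq_setIntegral hIo.measurableSet ⟨x, hx⟩ hint hΦmono
    (integral_Iic_gaussianPDFReal_pos 0 one_ne_zero) hA hla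
  have hAb := tendsto_atTop_of_comp_eq_setIntegral hIo.measurableSet ⟨x, hx⟩ hint
    (hc ▸ inv_mul_cancel₀ hZ.ne') hΦmono (integral_Iic_gaussianPDFReal_lt_one 0 one_ne_zero) hA hlb
  have key := le_of_tendsto_ends hIo hIc hla hlb
    (fun x hx => ((hf x hx).const_mul c).congr_deriv (mul_assoc _ _ _).symm)
    (fun x _ => mul_pos (hc ▸ inv_pos.2 hZ) (exp_pos _))
    hasDerivAt_gaussianPDFReal_zero_one hφ₀ hA' hB'' hBconv
    (tendsto_gaussianPDFReal_zero_one_cocompact.comp (hAa.mono_right atBot_le_cocompact))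
    (tendsto_gaussianPDFReal_zero_one_cocompact.comp (hAb.mono_right atTop_le_cocompact))
  rw [(hA' x hx).deriv]
  exact (one_le_div (hφ₀ _)).2 (key x hx)

/-- One-dimensional transport lemma: the Brenier-type map `A` pushing the
log-concave perturbation of the Gaussian forward to the Gaussian satisfies
`A' ≥ 1` on `I = (a,b)`. -/
theorem stmt_0
    (a b : EReal) (hab : a < b)
    (I : Set ℝ) (hI : I = {x : ℝ | a < (x : EReal) ∧ (x : EReal) < b})
    (B : ℝ → ℝ) (hB : ContDiffOn ℝ 2 B I)
    (hBconv : ∀ x ∈ I, 0 ≤ deriv (deriv B) x)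
    (hint : IntegrableOn (fun t => Real.exp (-t ^ 2 / 2 - B t)) I)
    (c : ℝ) (hc : c = (∫ t in I, Real.exp (-t ^ 2 / 2 - B t))⁻¹)
    (E : ℝ → ℝ)
    (hE : ∀ y, E y = (Real.sqrt (2 * Real.pi))⁻¹ * ∫ t in Iic y, Real.exp (-t ^ 2 / 2))
    (A : ℝ → ℝ)
    (hA : ∀ x ∈ I, E (A x) = c * ∫ t in I ∩ Iio x, Real.exp (-t ^ 2 / 2 - B t)) :
    ∀ x ∈ I, 1 ≤ deriv A x := by
  subst hI
  have hIo : IsOpen ((↑) ⁻¹' Ioo a b : Set ℝ) := isOpen_Ioo.preimage continuous_coe_real_ereal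
  have := neBot_comap_coe_nhdsGT hab
  have := neBot_comap_coe_nhdsLT hab
  have hE' : ∀ y, E y = ∫ t in Iic y, gaussianPDFReal 0 1 t := fun y => by
    simp only [hE, gaussianPDFReal_zero_one, integral_const_mul]
  refine one_le_deriv_of_transport_to_gaussian hIo
    (ordConnected_Ioo.preimage_mono EReal.coe_strictMono.monotone)
    (fun x hx => eventually_comap_coe_nhdsGT hx) (fun x hx => eventually_comap_coe_nhdsLT hx)
    (fun x hx => ((hB.differentiableOn (by norm_num)).differentiableAt
      (hIo.mem_nhds hx)).hasDerivAt)
    (fun x hx => (((hB.deriv_of_isOpen hIo (by norm_num)).differentiableOn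
      one_ne_zero).differentiableAt (hIo.mem_nhds hx)).hasDerivAt)
    hBconv hint hc fun x hx => (hE' _).symm.trans (hA x hx)
end

section
/- Let A be C³ on an open interval I with A' > 0, satisfying A''(x) = A'(x)(A(x)A'(x) - x - B'(x)) where B is C² with B'' ≥ 0. If A' has a local minimum at an interior point x₀ ∈ I, then A'(x₀) ≥ 1. -/
open Filter Topology

/-!
At a local minimum `x₀` of `A'` we have `A''(x₀) = 0` and `A'''(x₀) ≥ 0`. Differentiating the ODE
and using `A''(x₀) = 0` gives `A'''(x₀) = A'(x₀) (A'(x₀)² - 1 - B''(x₀))`, so `A' > 0` and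
`B'' ≥ 0` force `A'(x₀)² ≥ 1`.
-/

theorem IsLocalMin.deriv_deriv_nonneg {f : ℝ → ℝ} {x₀ : ℝ} (hmin : IsLocalMin f x₀)
    (hc : ContinuousAt f x₀) : 0 ≤ deriv (deriv f) x₀ := by
  by_contra! hneg
  have hmax : IsLocalMax f x₀ := isLocalMax_of_deriv_deriv_neg hneg hmin.deriv_eq_zero hc
  have hconst : f =ᶠ[𝓝 x₀] fun _ ↦ f x₀ := by
    filter_upwards [hmin, hmax] with x hge hle using le_antisymm hle hge
  have hderiv : deriv f =ᶠ[𝓝 x₀] fun _ ↦ 0 := by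
    filter_upwards [hconst.eventuallyEq_nhds] with x hx
    rw [hx.deriv_eq, deriv_const]
  rw [hderiv.deriv_eq, deriv_const] at hneg
  exact lt_irrefl 0 hneg

theorem stmt_4_general
    (I : Set ℝ) (hIopen : IsOpen I)
    (A B : ℝ → ℝ)
    (hA : ContDiffOn ℝ 3 A I) (hA' : ∀ x ∈ I, 0 < deriv A x)
    (hB : ContDiffOn ℝ 2 B I) (hBconv : ∀ x ∈ I, 0 ≤ deriv (deriv B) x)
    (hode : ∀ x ∈ I, deriv (deriv A) x = deriv A x * (A x * deriv A x - x - deriv B x))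
    (x₀ : ℝ) (hx₀ : x₀ ∈ I) (hmin : IsLocalMin (deriv A) x₀) :
    1 ≤ deriv A x₀ := by
  have hI : I ∈ 𝓝 x₀ := hIopen.mem_nhds hx₀
  have hA₁ : ContDiffAt ℝ 2 (deriv A) x₀ :=
    (hA.deriv_of_isOpen hIopen (by norm_num)).contDiffAt hI
  have hA₀d : HasDerivAt A (deriv A x₀) x₀ :=
    ((hA.contDiffAt hI).differentiableAt (by norm_num)).hasDerivAt
  have hA₁d : HasDerivAt (deriv A) (deriv (deriv A) x₀) x₀ :=
    (hA₁.differentiableAt (by norm_num)).hasDerivAt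
  have hB₁ : ContDiffAt ℝ 1 (deriv B) x₀ :=
    (hB.deriv_of_isOpen hIopen (by norm_num)).contDiffAt hI
  have hB₁d : HasDerivAt (deriv B) (deriv (deriv B) x₀) x₀ :=
    (hB₁.differentiableAt (by norm_num)).hasDerivAt
  have hcrit : deriv (deriv A) x₀ = 0 := hmin.deriv_eq_zero
  have hthird : deriv (deriv (deriv A)) x₀
      = deriv A x₀ * (deriv A x₀ ^ 2 - 1 - deriv (deriv B) x₀) := by
    have hrhs : HasDerivAt (fun x ↦ deriv A x * (A x * deriv A x - x - deriv B x)) _ x₀ :=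
      hA₁d.mul (((hA₀d.mul hA₁d).sub (hasDerivAt_id' x₀)).sub hB₁d)
    rw [(eventuallyEq_of_mem hI hode).deriv_eq, hrhs.deriv, hcrit]
    ring
  have hthird_nonneg := hmin.deriv_deriv_nonneg hA₁.continuousAt
  nlinarith [hA' x₀ hx₀, hBconv x₀ hx₀]

/-- At an interior local minimum of `A'`, the ODE `A'' = A'(A A' - x - B')`
together with `B'' ≥ 0` forces `A' ≥ 1`. -/
theorem stmt_4
    (I : Set ℝ) (hIopen : IsOpen I) (hIconn : Set.OrdConnected I)
    (A B : ℝ → ℝ)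
    (hA : ContDiffOn ℝ 3 A I) (hA' : ∀ x ∈ I, 0 < deriv A x)
    (hB : ContDiffOn ℝ 2 B I) (hBconv : ∀ x ∈ I, 0 ≤ deriv (deriv B) x)
    (hode : ∀ x ∈ I, deriv (deriv A) x = deriv A x * (A x * deriv A x - x - deriv B x))
    (x₀ : ℝ) (hx₀ : x₀ ∈ I) (hmin : IsLocalMin (deriv A) x₀) :
    1 ≤ deriv A x₀ :=
  stmt_4_general I hIopen A B hA hA' hB hBconv hode x₀ hx₀ hmin
end

section
/- Let B : ℝ → ℝ be convex and C¹ and suppose lim_{x→a⁺}(x²/2 + B(x)) = +∞ where a ∈ [-∞, ∞) is the left endpoint of the domain interval. Then lim_{x→a⁺}(x + B'(x)) = -∞. -/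
open Real Set Filter

/-!
If `x + B'(x) ≥ M` for all `x ≤ y`, then the tangent line of the convex function `B` at `x`,
evaluated at `y`, gives `x²/2 + B(x) ≤ (M + y)²/2 + B(y) - M y`, contradicting `x²/2 + B(x) → ∞`.
So `x + B'(x)`, which is nondecreasing because `B'` is, is unbounded below and hence tends to `-∞`.
-/

lemma ConvexOn.add_deriv_mul_sub_le {s : Set ℝ} {f : ℝ → ℝ} (hf : ConvexOn ℝ s f) {x y : ℝ}
    (hx : x ∈ s) (hy : y ∈ s) (hxy : x ≤ y) (hd : DifferentiableAt ℝ f x) :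
    f x + deriv f x * (y - x) ≤ f y := by
  rcases hxy.eq_or_lt with rfl | hlt
  · simp
  have hslope := hf.deriv_le_slope hx hy hlt hd
  rw [slope_def_field, le_div_iff₀ (sub_pos.2 hlt)] at hslope
  linarith

lemma ConvexOn.sq_div_two_add_le_of_le_add_deriv {s : Set ℝ} {f : ℝ → ℝ} (hf : ConvexOn ℝ s f)
    {x y M : ℝ} (hx : x ∈ s) (hy : y ∈ s) (hxy : x ≤ y) (hd : DifferentiableAt ℝ f x)
    (hM : M ≤ x + deriv f x) :
    x ^ 2 / 2 + f x ≤ (M + y) ^ 2 / 2 + f y - M * y := by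
  have htangent := hf.add_deriv_mul_sub_le hx hy hxy hd
  have hderiv : (M - x) * (y - x) ≤ deriv f x * (y - x) :=
    mul_le_mul_of_nonneg_right (by linarith) (sub_nonneg.2 hxy)
  nlinarith [sq_nonneg (x - (M + y))]

theorem stmt_6_general
    (a b : EReal)
    (I : Set ℝ) (hI : I = {x : ℝ | a < (x : EReal) ∧ (x : EReal) < b})
    (B : ℝ → ℝ) (hB : ContDiffOn ℝ 1 B I) (hBconv : ConvexOn ℝ I B)
    (hlim : Tendsto (fun x : I => (x : ℝ) ^ 2 / 2 + B x) atBot atTop) :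
    Tendsto (fun x : I => (x : ℝ) + deriv B x) atBot atBot := by
  rcases isEmpty_or_nonempty I with hempty | hnonempty
  · exact tendsto_of_isEmpty
  obtain ⟨y⟩ := id hnonempty
  have hIopen : IsOpen I := hI ▸ isOpen_Ioo.preimage continuous_coe_real_ereal
  have hdiff (x : ℝ) (hx : x ∈ I) : DifferentiableAt ℝ B x :=
    (hB.differentiableOn one_ne_zero x hx).differentiableAt (hIopen.mem_nhds hx)
  have hmono : Monotone fun x : I => (x : ℝ) + deriv B x := fun x x' hxx' =>
    add_le_add hxx' (hBconv.monotoneOn_deriv hdiff x.2 x'.2 hxx')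
  refine hmono.tendsto_atBot_atBot fun M => ?_
  by_contra! hbdd
  obtain ⟨x, hbig, hxy⟩ :=
    ((hlim.eventually_gt_atTop ((M + y) ^ 2 / 2 + B y - M * y)).and (eventually_le_atBot y)).exists
  exact hbig.not_ge <|
    hBconv.sq_div_two_add_le_of_le_add_deriv x.2 y.2 hxy (hdiff x x.2) (hbdd x).le

/-- If `B` is convex and `C¹` on `(a,b)` and `x²/2 + B(x) → +∞` as `x → a⁺`,
then `x + B'(x) → -∞` as `x → a⁺` (limits via the `atBot` filter on the subtype `I`). -/
theorem stmt_6
    (a b : EReal) (hab : a < b)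
    (I : Set ℝ) (hI : I = {x : ℝ | a < (x : EReal) ∧ (x : EReal) < b})
    (B : ℝ → ℝ) (hB : ContDiffOn ℝ 1 B I) (hBconv : ConvexOn ℝ I B)
    (hlim : Tendsto (fun x : I => (x : ℝ) ^ 2 / 2 + B x) atBot atTop) :
    Tendsto (fun x : I => (x : ℝ) + deriv B x) atBot atBot :=
  stmt_6_general a b I hI B hB hBconv hlim
end

section
/- For A(x) = x + αx³ with α > 0, define B : ℝ → ℝ by exp(-A(x)²/2) A'(x) = √(2π) exp(-x²/2 - B(x)), i.e. B(x) = αx⁴ + α²x⁶/2 - log(1 + 3αx²) + log√(2π). Then B''(0) = -6α < 0; in particular B is not convex. -/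
open Real Set

/-!
Since `B` is differentiable everywhere, convexity would make `B'` monotone and hence force
`B''(0) ≥ 0`. But `B''(0)` only sees the logarithmic term: the polynomial part of `B` has
order `x⁴` at the origin, while `log (1 + 3αx²)` has second derivative `6α` there.
-/

theorem ConvexOn.deriv_deriv_nonneg {f : ℝ → ℝ} (hf : ConvexOn ℝ univ f)
    (hd : Differentiable ℝ f) (x : ℝ) : 0 ≤ deriv (deriv f) x :=
  (monotoneOn_univ.1 (hf.monotoneOn_deriv fun y _ ↦ hd y)).deriv_nonneg

-- `B` for `A(x) = x + αx³`
noncomputable def cubicPotential (α x : ℝ) : ℝ :=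
  α * x ^ 4 + α ^ 2 * x ^ 6 / 2 - log (1 + 3 * α * x ^ 2) + log (sqrt (2 * π))

theorem hasDerivAt_cubicPotential {α : ℝ} (hα : 0 ≤ α) (x : ℝ) :
    HasDerivAt (cubicPotential α)
      (4 * α * x ^ 3 + 3 * α ^ 2 * x ^ 5 - 6 * α * x / (1 + 3 * α * x ^ 2)) x := by
  have hlog : HasDerivAt (fun x ↦ log (1 + 3 * α * x ^ 2))
      (3 * α * (2 * x) / (1 + 3 * α * x ^ 2)) x := by
    have hpos : 0 < 1 + 3 * α * x ^ 2 := by positivity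
    refine HasDerivAt.log ?_ hpos.ne'
    simpa using ((hasDerivAt_pow 2 x).const_mul (3 * α)).const_add 1
  have := ((((hasDerivAt_pow 4 x).const_mul α).add
    (((hasDerivAt_pow 6 x).const_mul (α ^ 2)).div_const 2)).sub hlog).add_const
    (log (sqrt (2 * π)))
  exact this.congr_deriv (by push_cast; ring)

theorem hasDerivAt_deriv_cubicPotential_zero {α : ℝ} (hα : 0 ≤ α) :
    HasDerivAt (deriv (cubicPotential α)) (-6 * α) 0 := by
  rw [funext fun x ↦ (hasDerivAt_cubicPotential hα x).deriv]
  have hquot : HasDerivAt (fun x ↦ 6 * α * x / (1 + 3 * α * x ^ 2)) (6 * α) 0 := by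
    have hden : HasDerivAt (fun x : ℝ ↦ 1 + 3 * α * x ^ 2) 0 0 := by
      simpa using ((hasDerivAt_pow 2 (0 : ℝ)).const_mul (3 * α)).const_add 1
    exact (((hasDerivAt_id (0 : ℝ)).const_mul (6 * α)).div hden (by norm_num)).congr_deriv
      (by norm_num)
  exact ((((hasDerivAt_pow 3 (0 : ℝ)).const_mul (4 * α)).add
    ((hasDerivAt_pow 5 (0 : ℝ)).const_mul (3 * α ^ 2))).sub hquot).congr_deriv (by norm_num)

/-- For `A(x) = x + αx³`, the associated `B` has `B''(0) = -6α < 0`,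
so `B` is not convex. -/
theorem stmt_8
    (α : ℝ) (hα : 0 < α)
    (B : ℝ → ℝ)
    (hB : ∀ x, B x = α * x ^ 4 + α ^ 2 * x ^ 6 / 2 - Real.log (1 + 3 * α * x ^ 2)
      + Real.log (Real.sqrt (2 * Real.pi))) :
    deriv (deriv B) 0 = -6 * α ∧ -6 * α < 0 ∧ ¬ ConvexOn ℝ Set.univ B := by
  obtain rfl : B = cubicPotential α := funext hB
  have hB'' : deriv (deriv (cubicPotential α)) 0 = -6 * α :=
    (hasDerivAt_deriv_cubicPotential_zero hα.le).deriv
  refine ⟨hB'', by linarith, fun hconv ↦ ?_⟩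
  have hnonneg := hconv.deriv_deriv_nonneg
    (fun x ↦ (hasDerivAt_cubicPotential hα.le x).differentiableAt) 0
  linarith
end
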